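/- Let A be an arbitrary d×d complex matrix, G a Hermitian unitary d×d matrix, V(θ) = exp(−i(θ/2)G), and O a Hermitian d×d matrix that anti-commutes with G (OG = −GO). Then, with E_θ the expectation over θ uniform on [−aπ, aπ] for a ∈ (0,1): (1) E_θ Tr[O V(θ) A V(θ)†] = γ · Tr[OA], and (2) E_θ (d/dθ) Tr[O V(θ) A V(θ)†] = γ · Tr[iGOA], where γ = sin(aπ)/(aπ). -/

import Mathlib

open MeasureTheory Matrix BigOperators

noncomputable section
set_option maxHeartbeats 1000000

/-- `V(θ) = exp(-i (θ/2) G)` (matrix exponential). -/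
def Vrot {d : ℕ} (G : Matrix (Fin d) (Fin d) ℂ) (θ : ℝ) : Matrix (Fin d) (Fin d) ℂ :=
  NormedSpace.exp ((-(θ : ℂ) * Complex.I / 2) • G)

/-- Expectation `E_θ f(θ) = (1/(2aπ)) ∫_{-aπ}^{aπ} f(θ) dθ` of a complex-valued function of a
single parameter `θ` uniform on `[-aπ, aπ]`. -/
def expect1 (a : ℝ) (f : ℝ → ℂ) : ℂ :=
  (1 / (2 * a * Real.pi) : ℂ) * ∫ θ in (-(a * Real.pi))..(a * Real.pi), f θ

/-- Matrix exponential of a multiple of an involution. -/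
lemma exp_smul_invol {d : ℕ} (G : Matrix (Fin d) (Fin d) ℂ) (hGU : G * G = 1) (z : ℂ) :
    NormedSpace.exp ((z * Complex.I) • G) =
      Complex.cos z • (1 : Matrix (Fin d) (Fin d) ℂ) + (Complex.sin z * Complex.I) • G := by
  letI : SeminormedRing (Matrix (Fin d) (Fin d) ℂ) := Matrix.linftyOpSemiNormedRing
  letI : NormedRing (Matrix (Fin d) (Fin d) ℂ) := Matrix.linftyOpNormedRing
  letI : NormedAlgebra ℂ (Matrix (Fin d) (Fin d) ℂ) := Matrix.linftyOpNormedAlgebra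
  have hGpow : ∀ k : ℕ, G ^ (2 * k) = 1 := fun k => by rw [pow_mul, sq, hGU, one_pow]
  have hsum : HasSum (fun n : ℕ => ((n.factorial : ℂ))⁻¹ • ((z * Complex.I) • G) ^ n)
      (Complex.cos z • (1 : Matrix (Fin d) (Fin d) ℂ) + (Complex.sin z * Complex.I) • G) := by
    have heven : HasSum
        (fun k : ℕ => (((2 * k).factorial : ℂ))⁻¹ • ((z * Complex.I) • G) ^ (2 * k))
        (Complex.cos z • (1 : Matrix (Fin d) (Fin d) ℂ)) := by
      have h1 := (Complex.hasSum_cos' z).smul_const (1 : Matrix (Fin d) (Fin d) ℂ)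
      convert h1 using 2 with k
      rw [smul_pow, hGpow k, smul_smul, div_eq_mul_inv, mul_comm]
    have hodd : HasSum
        (fun k : ℕ => (((2 * k + 1).factorial : ℂ))⁻¹ • ((z * Complex.I) • G) ^ (2 * k + 1))
        ((Complex.sin z * Complex.I) • G) := by
      have h0 := (Complex.hasSum_sin' z).mul_right Complex.I
      have h1 : HasSum
          (fun k : ℕ => (z * Complex.I) ^ (2 * k + 1) / ((2 * k + 1).factorial : ℂ))
          (Complex.sin z * Complex.I) := by
        simp only [div_mul_cancel₀ _ Complex.I_ne_zero] at h0
        exact h0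
      have h2 := h1.smul_const G
      convert h2 using 2 with k
      have hGpow' : G ^ (2 * k + 1) = G := by rw [pow_succ, hGpow k, one_mul]
      rw [smul_pow, hGpow', smul_smul, div_eq_mul_inv, mul_comm]
    exact HasSum.even_add_odd (f := fun n : ℕ => ((n.factorial : ℂ))⁻¹ • ((z * Complex.I) • G) ^ n) heven hodd
  exact (NormedSpace.exp_series_hasSum_exp' ((z * Complex.I) • G)).unique hsum

lemma Vrot_eq {d : ℕ} (G : Matrix (Fin d) (Fin d) ℂ) (hGU : G * G = 1) (θ : ℝ) :
    Vrot G θ = (Real.cos (θ / 2) : ℂ) • (1 : Matrix (Fin d) (Fin d) ℂ) +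
      (-(Real.sin (θ / 2) : ℂ) * Complex.I) • G := by
  have harg : (-(θ : ℂ) * Complex.I / 2) = ((-(θ / 2) : ℝ) : ℂ) * Complex.I := by
    push_cast; ring
  rw [Vrot, harg, exp_smul_invol G hGU]
  rw [← Complex.ofReal_cos, ← Complex.ofReal_sin, Real.cos_neg, Real.sin_neg]
  push_cast
  ring_nf

/-- The trace as an explicit function of θ. -/
lemma trace_formula {d : ℕ} (A G O : Matrix (Fin d) (Fin d) ℂ)
    (hGH : G.IsHermitian) (hGU : G * G = 1) (hanti : O * G = -(G * O)) (θ : ℝ) :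
    Matrix.trace (O * Vrot G θ * A * (Vrot G θ)ᴴ) =
      (Real.cos θ : ℂ) * Matrix.trace (O * A) +
      (Real.sin θ : ℂ) * (Complex.I * Matrix.trace (G * O * A)) := by
  set c : ℂ := (Real.cos (θ / 2) : ℂ) with hc
  set s : ℂ := (Real.sin (θ / 2) : ℂ) with hs
  have hV : Vrot G θ = c • (1 : Matrix (Fin d) (Fin d) ℂ) + (-s * Complex.I) • G :=
    Vrot_eq G hGU θ
  have hVH : (Vrot G θ)ᴴ = c • (1 : Matrix (Fin d) (Fin d) ℂ) + (s * Complex.I) • G := by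
    rw [hV, conjTranspose_add, conjTranspose_smul, conjTranspose_smul, conjTranspose_one,
      hGH.eq]
    have h1 : star c = c := by rw [hc, Complex.star_def, Complex.conj_ofReal]
    have h2 : star (-s * Complex.I) = s * Complex.I := by
      rw [star_mul', star_neg, Complex.star_def, Complex.conj_I, hs, Complex.conj_ofReal]
      ring
    rw [h1, h2]
  have hGO : G * O = -(O * G) := by rw [hanti, neg_neg]
  have hOGAtr : Matrix.trace (O * G * A) = -Matrix.trace (G * O * A) := by
    rw [hanti]; simp [Matrix.mul_assoc]
  have hOGAG : Matrix.trace (O * G * A * G) = -Matrix.trace (O * A) := by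
    rw [Matrix.trace_mul_comm (O * G * A) G]
    have key : G * (O * G * A) = -(O * A) := by
      rw [← Matrix.mul_assoc, ← Matrix.mul_assoc, hGO, Matrix.neg_mul, Matrix.neg_mul,
        Matrix.mul_assoc O G G, hGU, Matrix.mul_one]
    rw [key, Matrix.trace_neg]
  have hOAG : Matrix.trace (O * A * G) = Matrix.trace (G * O * A) := by
    rw [Matrix.trace_mul_cycle]
  rw [hVH, hV]
  have expand : O * (c • (1 : Matrix (Fin d) (Fin d) ℂ) + (-s * Complex.I) • G) * A *
      (c • (1 : Matrix (Fin d) (Fin d) ℂ) + (s * Complex.I) • G) =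
      (c * c) • (O * A) + (c * (s * Complex.I)) • (O * A * G) +
      ((-s * Complex.I) * c) • (O * G * A) +
      ((-s * Complex.I) * (s * Complex.I)) • (O * G * A * G) := by
    simp only [Matrix.mul_add, Matrix.add_mul, Matrix.mul_smul, Matrix.smul_mul,
      Matrix.mul_one, Matrix.one_mul, smul_smul, Matrix.mul_assoc]
    match_scalars <;> ring
  rw [expand]
  simp only [Matrix.trace_add, Matrix.trace_smul, hOAG, hOGAtr, hOGAG]
  have hI2 : Complex.I * Complex.I = -1 := Complex.I_mul_I
  have hcosθ : (Real.cos θ : ℂ) = c * c - s * s := by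
    have h2 : θ = 2 * (θ / 2) := by ring
    rw [h2, Real.cos_two_mul']
    push_cast [hc, hs]
    ring
  have hsinθ : (Real.sin θ : ℂ) = 2 * s * c := by
    have h2 : θ = 2 * (θ / 2) := by ring
    rw [h2, Real.sin_two_mul]
    push_cast [hc, hs]
    ring
  rw [hcosθ, hsinθ]
  simp only [smul_eq_mul]
  linear_combination (s * s * Matrix.trace (O * A)) * hI2

lemma integral_cos_mul (b : ℝ) (w : ℂ) :
    ∫ θ in (-b)..b, (Real.cos θ : ℂ) * w = ((2 * Real.sin b : ℝ) : ℂ) * w := by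
  rw [intervalIntegral.integral_mul_const, intervalIntegral.integral_ofReal, integral_cos]
  push_cast [Real.sin_neg]
  ring

lemma integral_sin_mul (b : ℝ) (w : ℂ) :
    ∫ θ in (-b)..b, (Real.sin θ : ℂ) * w = 0 := by
  rw [intervalIntegral.integral_mul_const, intervalIntegral.integral_ofReal, integral_sin]
  push_cast [Real.cos_neg]
  ring

lemma cos_mul_intervalIntegrable (b : ℝ) (w : ℂ) :
    IntervalIntegrable (fun θ : ℝ => (Real.cos θ : ℂ) * w) MeasureTheory.volume (-b) b :=
  ((Complex.continuous_ofReal.comp Real.continuous_cos).mul continuous_const).intervalIntegrable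
    _ _

lemma sin_mul_intervalIntegrable (b : ℝ) (w : ℂ) :
    IntervalIntegrable (fun θ : ℝ => (Real.sin θ : ℂ) * w) MeasureTheory.volume (-b) b :=
  ((Complex.continuous_ofReal.comp Real.continuous_sin).mul continuous_const).intervalIntegrable
    _ _

/-- Expectation of `cos θ * w₀ + sin θ * w₁`. -/
lemma expect1_cos_sin (a : ℝ) (ha : 0 < a) (w₀ w₁ : ℂ) :
    expect1 a (fun θ => (Real.cos θ : ℂ) * w₀ + (Real.sin θ : ℂ) * w₁) =
      ((Real.sin (a * Real.pi) / (a * Real.pi) : ℝ) : ℂ) * w₀ := by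
  rw [expect1]
  rw [intervalIntegral.integral_add (cos_mul_intervalIntegrable _ _)
    (sin_mul_intervalIntegrable _ _), integral_cos_mul, integral_sin_mul, add_zero]
  have hπ : (Real.pi : ℂ) ≠ 0 := by
    exact_mod_cast Real.pi_ne_zero
  have haC : (a : ℂ) ≠ 0 := by
    exact_mod_cast ne_of_gt ha
  push_cast
  field_simp

/-- for a Hermitian unitary `G` and a Hermitian `O` anti-commuting with `G`,
`E_θ Tr[O V A V†] = γ Tr[OA]` and `E_θ (d/dθ) Tr[O V A V†] = γ Tr[iGOA]`. -/
theorem statement10 {d : ℕ} (hd : 1 ≤ d) (A G O : Matrix (Fin d) (Fin d) ℂ)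
    (hGH : G.IsHermitian) (hGU : G * G = 1)
    (hOH : O.IsHermitian) (hanti : O * G = -(G * O))
    (a : ℝ) (ha : a ∈ Set.Ioo (0 : ℝ) 1) :
    expect1 a (fun θ => Matrix.trace (O * Vrot G θ * A * (Vrot G θ)ᴴ)) =
      ((Real.sin (a * Real.pi) / (a * Real.pi) : ℝ) : ℂ) * Matrix.trace (O * A) ∧
    expect1 a
        (fun θ => deriv (fun t => Matrix.trace (O * Vrot G t * A * (Vrot G t)ᴴ)) θ) =
      ((Real.sin (a * Real.pi) / (a * Real.pi) : ℝ) : ℂ) *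
        (Complex.I * Matrix.trace (G * O * A)) := by
  set T₀ : ℂ := Matrix.trace (O * A) with hT₀
  set T₁ : ℂ := Matrix.trace (G * O * A) with hT₁
  have hfun : (fun θ : ℝ => Matrix.trace (O * Vrot G θ * A * (Vrot G θ)ᴴ)) =
      fun θ : ℝ => (Real.cos θ : ℂ) * T₀ + (Real.sin θ : ℂ) * (Complex.I * T₁) := by
    funext θ
    exact trace_formula A G O hGH hGU hanti θ
  constructor
  · rw [hfun]
    exact expect1_cos_sin a ha.1 T₀ (Complex.I * T₁)
  · have hderiv : (fun θ : ℝ =>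
        deriv (fun t => Matrix.trace (O * Vrot G t * A * (Vrot G t)ᴴ)) θ) =
        fun θ : ℝ => (Real.cos θ : ℂ) * (Complex.I * T₁) + (Real.sin θ : ℂ) * (-T₀) := by
      funext θ
      rw [hfun]
      have h1 : HasDerivAt (fun t : ℝ => ((Real.cos t : ℂ)) * T₀)
          (((-Real.sin θ : ℝ) : ℂ) * T₀) θ :=
        ((Real.hasDerivAt_cos θ).ofReal_comp).mul_const T₀
      have h2 : HasDerivAt (fun t : ℝ => ((Real.sin t : ℂ)) * (Complex.I * T₁))
          (((Real.cos θ : ℝ) : ℂ) * (Complex.I * T₁)) θ :=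
        ((Real.hasDerivAt_sin θ).ofReal_comp).mul_const (Complex.I * T₁)
      have h3 : HasDerivAt (fun t : ℝ => (Real.cos t : ℂ) * T₀ + (Real.sin t : ℂ) * (Complex.I * T₁))
          (((-Real.sin θ : ℝ) : ℂ) * T₀ + ((Real.cos θ : ℝ) : ℂ) * (Complex.I * T₁)) θ := h1.add h2
      rw [h3.deriv]
      push_cast
      ring
    rw [hderiv]
    exact expect1_cos_sin a ha.1 (Complex.I * T₁) (-T₀)

end
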